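/- arXiv:1106.4732 — 2 statements merged into one kernel-verified Lean document; each statement's English description precedes it below -/
import Mathlib

section
/- With notation as in the context, assume N(𝔞) = κ|Δ|/D, λ ∈ 𝔡₂⁻¹𝔞 with 𝔡₂⁻¹𝔞 = O_k·λ + 𝔞 and N_{k/ℚ}(λ) − κ ∈ N(𝔞)ℤ, and let O_{𝔞,λ,B} = { [α,β] ∈ B : α ∈ 𝔡₂⁻¹, β ∈ 𝔞⁻¹, α + λβ ∈ O_k }. Then for every b ∈ k^×, conjugation by i(b) = [b, 0; 0, b̄] inside M₂(k) satisfies i(b)·O_{𝔞,λ,B}·i(b)⁻¹ = O_{𝔞_b, λ_b, B}, where 𝔞_b = (b̄b⁻¹)·𝔞 and λ_b = b̄b⁻¹·λ; moreover 𝔞_b and λ_b again satisfy the hypotheses (N(𝔞_b) = N(𝔞) = κ|Δ|/D, λ_b ∈ 𝔡₂⁻¹𝔞_b generates 𝔡₂⁻¹𝔞_b modulo 𝔞_b, and N_{k/ℚ}(λ_b) − κ ∈ N(𝔞_b)ℤ). (This is the principal-idèle case of the conjugation action on the set of maximal orders O_{𝔞,λ,B}.) -/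
/-!
Conjugation by `i(b) = diag(b, b̄)` fixes `α` and replaces `β` by `(b / b̄)·β`; the second row
keeps the shape `[κβ̄, ᾱ]` because `σ` is an involution of the quadratic field `k`. Writing
`u = b̄ / b`, the conditions `β ∈ 𝔞⁻¹` and `α + λβ ∈ O_k` thus become `β ∈ (u𝔞)⁻¹` and
`α + (uλ)β ∈ O_k`. Since `N(u) = 1`, multiplying `𝔞` and `λ` by `u` changes neither the norm of
`𝔞` nor `N(λ)`, and the membership and generation conditions are homogeneous in `u`.
-/

noncomputable section

open Matrix NumberField FractionalIdeal
open scoped Quaternion nonZeroDivisors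

variable (k : Type*) [Field k] [NumberField k]

/-- The matrix `[α, β] = [α, β; κ·σ(β), σ(α)] ∈ M₂(k)` (`σ` the conjugation of `k/ℚ`,
`κ ∈ ℚ^×`). -/
def qmat (σ : k ≃ₐ[ℚ] k) (κ : ℚ) (α β : k) : Matrix (Fin 2) (Fin 2) k :=
  !![α, β; (κ : k) * σ β, σ α]

/-- The embedding `i : k → B ⊆ M₂(k)`, `i(b) = [b, 0; 0, b̄]`. -/
def imat (σ : k ≃ₐ[ℚ] k) (b : k) : Matrix (Fin 2) (Fin 2) k :=
  !![b, 0; 0, σ b]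

/-- The set `O_{𝔞,λ,B} = { [α,β] ∈ B : α ∈ 𝔡₂⁻¹, β ∈ 𝔞⁻¹, α + λβ ∈ O_k }`. -/
def Oset (σ : k ≃ₐ[ℚ] k) (κ : ℚ) (𝔡₂ 𝔞 : FractionalIdeal (𝓞 k)⁰ k) (lam : k) :
    Set (Matrix (Fin 2) (Fin 2) k) :=
  {M | ∃ α β : k, M = qmat k σ κ α β ∧ α ∈ 𝔡₂⁻¹ ∧ β ∈ 𝔞⁻¹ ∧
    α + lam * β ∈ (1 : FractionalIdeal (𝓞 k)⁰ k)}

/-- A prime `p` ramifies in the quaternion algebra `B ≅ (Δ, κ / ℚ)` if and only if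
`ℚ_p ⊗_ℚ B ≅ (Δ, κ / ℚ_p)` is a division ring, i.e. every nonzero element is a unit. -/
def RamifiedAt (Δ : ℤ) (κ : ℚ) (p : ℕ) [Fact p.Prime] : Prop :=
  ∀ x : ℍ[ℚ_[p], ((Δ : ℚ_[p])), ((κ : ℚ_[p]))], x ≠ 0 → IsUnit x

theorem AlgEquiv.involutive_of_finrank_eq_two {F K : Type*} [Field F] [Field K] [Algebra F K]
    (h : Module.finrank F K = 2) (σ : K ≃ₐ[F] K) : Function.Involutive σ := by
  have : FiniteDimensional F K := Module.finite_of_finrank_eq_succ h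
  have hle : orderOf σ ≤ 2 := h ▸ orderOf_le_card_univ.trans AlgEquiv.card_le
  have hsq : σ ^ 2 = 1 := by
    rw [← orderOf_dvd_iff_pow_eq_one]
    interval_cases hσ : orderOf σ
    · exact absurd hσ (orderOf_pos σ).ne'
    · exact one_dvd 2
    · exact dvd_rfl
  intro x
  simpa [pow_two] using congr($hsq x)

theorem Algebra.norm_algEquiv_apply_mul_inv {F K : Type*} [Field F] [Field K] [Algebra F K]
    [FiniteDimensional F K] (σ : K ≃ₐ[F] K) {b : K} (hb : b ≠ 0) :
    Algebra.norm F (σ b * b⁻¹) = 1 := by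
  apply mul_right_cancel₀ (Algebra.norm_ne_zero_iff.mpr hb)
  rw [← map_mul, inv_mul_cancel_right₀ hb, Algebra.norm_eq_of_algEquiv, one_mul]

theorem FractionalIdeal.mem_inv_spanSingleton_mul_iff {R K : Type*} [CommRing R]
    [IsDedekindDomain R] [Field K] [Algebra R K] [IsFractionRing R K] {u : K} (hu : u ≠ 0)
    (I : FractionalIdeal R⁰ K) (x : K) :
    x ∈ (spanSingleton R⁰ u * I)⁻¹ ↔ u * x ∈ I⁻¹ := by
  rw [mul_inv, spanSingleton_inv, mem_singleton_mul]
  constructor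
  · rintro ⟨y, hy, rfl⟩
    rwa [mul_inv_cancel_left₀ hu]
  · intro hx
    exact ⟨u * x, hx, (inv_mul_cancel_left₀ hu x).symm⟩

section Conjugation

variable {k} (σ : k ≃ₐ[ℚ] k)

theorem imat_inv {b : k} (hb : b ≠ 0) : (imat k σ b)⁻¹ = imat k σ b⁻¹ := by
  apply Matrix.inv_eq_right_inv
  simp [imat, Matrix.one_fin_two, hb]

theorem imat_mul_qmat_mul_imat_inv (hσ : Function.Involutive σ) (κ : ℚ) {b : k} (hb : b ≠ 0)
    (α β : k) :
    imat k σ b * qmat k σ κ α β * (imat k σ b)⁻¹ = qmat k σ κ α ((σ b * b⁻¹)⁻¹ * β) := by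
  have hσb : σ b ≠ 0 := by simpa using hb
  rw [imat_inv σ hb]
  ext i j
  fin_cases i <;> fin_cases j <;>
    simp [imat, qmat, map_inv₀, hσ _] <;> field_simp

theorem conj_imat_Oset (hσ : Function.Involutive σ) (κ : ℚ) (𝔡₂ 𝔞 : FractionalIdeal (𝓞 k)⁰ k)
    (lam : k) {b : k} (hb : b ≠ 0) :
    {N | ∃ M ∈ Oset k σ κ 𝔡₂ 𝔞 lam, N = imat k σ b * M * (imat k σ b)⁻¹}
      = Oset k σ κ 𝔡₂ (spanSingleton (𝓞 k)⁰ (σ b * b⁻¹) * 𝔞) (σ b * b⁻¹ * lam) := by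
  set u := σ b * b⁻¹
  have hu : u ≠ 0 := mul_ne_zero (by simpa using hb) (inv_ne_zero hb)
  ext N
  simp only [Oset, Set.mem_ofPred_eq, mem_inv_spanSingleton_mul_iff hu]
  constructor
  · rintro ⟨M, ⟨α, β, rfl, hα, hβ, hsum⟩, rfl⟩
    refine ⟨α, u⁻¹ * β, imat_mul_qmat_mul_imat_inv σ hσ κ hb α β, hα, ?_, ?_⟩
    · rwa [mul_inv_cancel_left₀ hu]
    · rwa [mul_assoc, mul_left_comm lam, mul_inv_cancel_left₀ hu]
  · rintro ⟨α, β, rfl, hα, hβ, hsum⟩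
    refine ⟨qmat k σ κ α (u * β), ⟨α, u * β, rfl, hα, hβ, by rwa [mul_left_comm, ← mul_assoc]⟩, ?_⟩
    rw [imat_mul_qmat_mul_imat_inv σ hσ κ hb, inv_mul_cancel_left₀ hu]

end Conjugation

theorem conjugation_of_Oset
    (Δ : ℤ)
    (hdeg : Module.finrank ℚ k = 2)
    (σ : k ≃ₐ[ℚ] k)
    (κ : ℚ)
    (D : ℕ)
    (𝔡₂ : FractionalIdeal (𝓞 k)⁰ k)
    (𝔞 : FractionalIdeal (𝓞 k)⁰ k)
    (h𝔞N : FractionalIdeal.absNorm 𝔞 = κ * ((|Δ| : ℤ) : ℚ) / (D : ℚ))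
    (lam : k) (hlam : lam ∈ 𝔡₂⁻¹ * 𝔞)
    (hlamgen : 𝔡₂⁻¹ * 𝔞 = spanSingleton (𝓞 k)⁰ lam + 𝔞)
    (hlamnorm : ∃ n : ℤ, Algebra.norm ℚ lam - κ = n * FractionalIdeal.absNorm 𝔞)
    -- the element `b ∈ k^×`, and the twisted data `𝔞_b = (b̄b⁻¹)𝔞`, `λ_b = b̄b⁻¹λ`
    (b : k) (hb : b ≠ 0) :
    -- `i(b)·O_{𝔞,λ,B}·i(b)⁻¹ = O_{𝔞_b,λ_b,B}` ...
    {N : Matrix (Fin 2) (Fin 2) k |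
        ∃ M ∈ Oset k σ κ 𝔡₂ 𝔞 lam, N = imat k σ b * M * (imat k σ b)⁻¹}
      = Oset k σ κ 𝔡₂ (spanSingleton (𝓞 k)⁰ (σ b * b⁻¹) * 𝔞) (σ b * b⁻¹ * lam) ∧
    -- ... and `(𝔞_b, λ_b)` again satisfies the hypotheses:
    FractionalIdeal.absNorm (spanSingleton (𝓞 k)⁰ (σ b * b⁻¹) * 𝔞)
      = κ * ((|Δ| : ℤ) : ℚ) / (D : ℚ) ∧
    (σ b * b⁻¹ * lam) ∈ 𝔡₂⁻¹ * (spanSingleton (𝓞 k)⁰ (σ b * b⁻¹) * 𝔞) ∧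
    𝔡₂⁻¹ * (spanSingleton (𝓞 k)⁰ (σ b * b⁻¹) * 𝔞)
      = spanSingleton (𝓞 k)⁰ (σ b * b⁻¹ * lam) + spanSingleton (𝓞 k)⁰ (σ b * b⁻¹) * 𝔞 ∧
    ∃ n : ℤ, Algebra.norm ℚ (σ b * b⁻¹ * lam) - κ
      = n * FractionalIdeal.absNorm (spanSingleton (𝓞 k)⁰ (σ b * b⁻¹) * 𝔞) := by
  have hnorm : Algebra.norm ℚ (σ b * b⁻¹) = 1 := Algebra.norm_algEquiv_apply_mul_inv σ hb
  have habs : absNorm (spanSingleton (𝓞 k)⁰ (σ b * b⁻¹) * 𝔞) = absNorm 𝔞 := by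
    rw [map_mul, absNorm_span_singleton, hnorm, abs_one, one_mul]
  have hcomm : 𝔡₂⁻¹ * (spanSingleton (𝓞 k)⁰ (σ b * b⁻¹) * 𝔞)
      = spanSingleton (𝓞 k)⁰ (σ b * b⁻¹) * (𝔡₂⁻¹ * 𝔞) := mul_left_comm _ _ _
  obtain ⟨n, hn⟩ := hlamnorm
  refine ⟨conj_imat_Oset σ (AlgEquiv.involutive_of_finrank_eq_two hdeg σ) κ 𝔡₂ 𝔞 lam hb,
    habs.trans h𝔞N, ?_, ?_, n, ?_⟩
  · rw [hcomm]
    exact mem_singleton_mul.mpr ⟨lam, hlam, rfl⟩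
  · rw [hcomm, hlamgen, mul_add, spanSingleton_mul_spanSingleton]
  · rw [map_mul, hnorm, one_mul, habs, hn]

end
end

section
/- With notation as in the context, let κ ∈ ℚ^× and β₀ ∈ k^×, and set κ' = N_{k/ℚ}(β₀)·κ. Then the map φ_{β₀} : B_κ → B_{κ'}, [α, β] ↦ [α, ββ₀⁻¹], is an isomorphism of ℚ-algebras. Moreover, if 𝔞 is a fractional O_k-ideal with N(𝔞) = κ|Δ|/D and λ ∈ 𝔡₂⁻¹𝔞 satisfies 𝔡₂⁻¹𝔞 = O_k·λ + 𝔞 and N_{k/ℚ}(λ) − κ ∈ N(𝔞)ℤ, then 𝔞' = β₀𝔞 and λ' = β₀λ satisfy the analogous conditions for κ' (N(𝔞') = κ'|Δ|/D, λ' generates 𝔡₂⁻¹𝔞' modulo 𝔞', and N_{k/ℚ}(λ') − κ' ∈ N(𝔞')ℤ), and φ_{β₀}(O_{𝔞,λ,B_κ}) = O_{𝔞',λ',B_{κ'}}. (This expresses that the maximal order O_{𝔞,λ,B} is unchanged when the element δ with δ² = κ used to coordinatize B is replaced by δ' = β₀δ.) -/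
/-!
Conjugation by `diag(1, β₀)` sends `[α, β]` with parameter `κ` to `[α, ββ₀⁻¹]` with parameter
`κ' = β₀ σ(β₀) κ = N(β₀) κ`, so `φ_{β₀}` is the restriction of an inner automorphism of `M₂(k)`.
Since `k` is imaginary quadratic, `N(β₀) > 0`, hence `N(β₀𝔞) = N(β₀) N(𝔞)`; the remaining
conditions are invariant under scaling by `β₀`, because `ββ₀⁻¹ ∈ (β₀𝔞)⁻¹ ↔ β ∈ 𝔞⁻¹` and
`(β₀λ)(ββ₀⁻¹) = λβ`.
-/

noncomputable section

open Matrix NumberField FractionalIdeal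
open scoped Quaternion nonZeroDivisors

variable (k : Type*) [Field k] [NumberField k]

/-- The quaternion algebra `B_κ ⊆ M₂(k)`, as a set of matrices. -/
def Bset (σ : k ≃ₐ[ℚ] k) (κ : ℚ) : Set (Matrix (Fin 2) (Fin 2) k) :=
  {M | ∃ α β : k, M = qmat k σ κ α β}

namespace Algebra.IsQuadraticExtension

variable {K L : Type*} [Field K] [Field L] [Algebra K L] [IsQuadraticExtension K L]

lemma exists_eq_algebraMap_add_algebraMap_mul {s : L} (hs : s ∉ Set.range (algebraMap K L))
    (x : L) : ∃ a c : K, x = algebraMap K L a + algebraMap K L c * s := by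
  have hli : LinearIndependent K ![1, s] := by
    refine LinearIndependent.pair_iff.mpr fun a c h => ?_
    by_cases hc : c = 0
    · subst hc
      simpa using h
    · refine absurd ⟨-(a / c), ?_⟩ hs
      rw [Algebra.smul_def, Algebra.smul_def, mul_one] at h
      rw [map_neg, map_div₀, ← neg_div, div_eq_iff ((_root_.map_ne_zero _).mpr hc)]
      linear_combination -h
  have hspan := hli.span_eq_top_of_card_eq_finrank' (by rw [Fintype.card_fin, finrank_eq_two])
  obtain ⟨c, hc⟩ :=
    (Submodule.mem_span_range_iff_exists_fun K).mp (hspan ▸ Submodule.mem_top (x := x))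
  exact ⟨c 0, c 1, by simp [← hc, Fin.sum_univ_two, Algebra.smul_def]⟩

variable [IsGalois K L] {σ : L ≃ₐ[K] L}

lemma card_algEquiv : Nat.card (L ≃ₐ[K] L) = 2 :=
  finrank_eq_two K L ▸ IsGalois.card_aut_eq_finrank K L

lemma algEquiv_apply_apply (σ : L ≃ₐ[K] L) (x : L) : σ (σ x) = x := by
  have h : σ ^ 2 = 1 := card_algEquiv (K := K) (L := L) ▸ pow_card_eq_one'
  exact congrArg (· x) h

lemma algebraMap_norm_eq_mul_apply (hσ : σ ≠ 1) (x : L) :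
    algebraMap K L (Algebra.norm K x) = x * σ x := by
  classical
  have huniv : (Finset.univ : Finset (L ≃ₐ[K] L)) = {1, σ} := by
    refine (Finset.eq_univ_of_card _ ?_).symm
    rw [Finset.card_pair hσ.symm, Fintype.card_eq_nat_card, card_algEquiv]
  rw [Algebra.norm_eq_prod_automorphisms, huniv, Finset.prod_pair hσ.symm]
  rfl

lemma norm_pos [LinearOrder K] [IsStrictOrderedRing K] (hσ : σ ≠ 1) {d : K} (hd : d < 0)
    {s : L} (hs : s ^ 2 = algebraMap K L d) (hσs : σ s = -s) {x : L} (hx : x ≠ 0) :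
    0 < Algebra.norm K x := by
  have hs_not_mem : s ∉ Set.range (algebraMap K L) := by
    rintro ⟨q, rfl⟩
    have hq : q ^ 2 = d := (algebraMap K L).injective (by rw [map_pow, hs])
    nlinarith [sq_nonneg q]
  obtain ⟨a, c, rfl⟩ := exists_eq_algebraMap_add_algebraMap_mul hs_not_mem x
  have hnorm : Algebra.norm K (algebraMap K L a + algebraMap K L c * s) = a ^ 2 - d * c ^ 2 := by
    apply (algebraMap K L).injective
    rw [algebraMap_norm_eq_mul_apply hσ, map_add, map_mul, hσs, AlgEquiv.commutes,
      AlgEquiv.commutes, map_sub, map_mul, map_pow, map_pow]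
    linear_combination -(algebraMap K L c) ^ 2 * hs
  have hac : a ≠ 0 ∨ c ≠ 0 := by
    by_contra! h
    simp [h.1, h.2] at hx
  rw [hnorm]
  rcases hac with ha | hc
  · nlinarith [sq_pos_of_ne_zero ha, sq_nonneg c]
  · nlinarith [sq_pos_of_ne_zero hc, sq_nonneg a]

end Algebra.IsQuadraticExtension

lemma AlgEquiv.ne_one_of_apply_eq_neg {K L : Type*} [CommSemiring K] [Ring L] [NoZeroDivisors L]
    [CharZero L] [Algebra K L] {σ : L ≃ₐ[K] L} {s : L} (hs : s ≠ 0) (hσs : σ s = -s) : σ ≠ 1 := by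
  rintro rfl
  exact hs (self_eq_neg.mp hσs)

lemma FractionalIdeal.mul_inv_mem_inv_spanSingleton_mul_iff {R K : Type*} [CommRing R]
    [IsDedekindDomain R] [Field K] [Algebra R K] [IsFractionRing R K]
    {I : FractionalIdeal R⁰ K} {x : K} (hx : x ≠ 0) (y : K) :
    y * x⁻¹ ∈ (spanSingleton R⁰ x * I)⁻¹ ↔ y ∈ I⁻¹ := by
  rw [_root_.mul_inv, spanSingleton_inv, mem_singleton_mul]
  constructor
  · rintro ⟨z, hz, h⟩
    rwa [mul_left_cancel₀ (inv_ne_zero hx) ((mul_comm _ _).trans h)]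
  · exact fun hy => ⟨y, hy, mul_comm _ _⟩

section QuaternionMatrices

variable {k} {σ : k ≃ₐ[ℚ] k}

lemma qmat_inj {κ : ℚ} {α β α' β' : k} :
    qmat k σ κ α β = qmat k σ κ α' β' ↔ α = α' ∧ β = β' :=
  ⟨fun h => ⟨congrFun (congrFun h 0) 0, congrFun (congrFun h 0) 1⟩, by rintro ⟨rfl, rfl⟩; rfl⟩

lemma qmat_add (κ : ℚ) (α β α' β' : k) :
    qmat k σ κ α β + qmat k σ κ α' β' = qmat k σ κ (α + α') (β + β') := by
  ext i j
  fin_cases i <;> fin_cases j <;> simp [qmat, mul_add]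

lemma qmat_mul (hσ : ∀ x, σ (σ x) = x) (κ : ℚ) (α β α' β' : k) :
    qmat k σ κ α β * qmat k σ κ α' β'
      = qmat k σ κ (α * α' + κ * (β * σ β')) (α * β' + β * σ α') := by
  ext i j
  fin_cases i <;> fin_cases j <;> simp [qmat, Matrix.mul_apply, hσ] <;> ring

lemma algebraMap_eq_qmat (κ : ℚ) (q : ℚ) :
    algebraMap ℚ (Matrix (Fin 2) (Fin 2) k) q = qmat k σ κ q 0 := by
  ext i j
  fin_cases i <;> fin_cases j <;> simp [qmat, Matrix.algebraMap_matrix_apply]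

lemma qmat_mem_Oset_iff {κ : ℚ} {𝔡₂ 𝔞 : FractionalIdeal (𝓞 k)⁰ k} {lam α β : k} :
    qmat k σ κ α β ∈ Oset k σ κ 𝔡₂ 𝔞 lam ↔
      α ∈ 𝔡₂⁻¹ ∧ β ∈ 𝔞⁻¹ ∧ α + lam * β ∈ (1 : FractionalIdeal (𝓞 k)⁰ k) := by
  constructor
  · rintro ⟨α', β', h, hα, hβ, hαβ⟩
    obtain ⟨rfl, rfl⟩ := qmat_inj.mp h
    exact ⟨hα, hβ, hαβ⟩
  · exact fun h => ⟨α, β, rfl, h⟩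

variable (σ) in
def quaternionSubalgebra (hσ : ∀ x, σ (σ x) = x) (κ : ℚ) :
    Subalgebra ℚ (Matrix (Fin 2) (Fin 2) k) where
  carrier := Bset k σ κ
  mul_mem' := by
    rintro _ _ ⟨α, β, rfl⟩ ⟨α', β', rfl⟩
    exact ⟨_, _, qmat_mul hσ κ α β α' β'⟩
  add_mem' := by
    rintro _ _ ⟨α, β, rfl⟩ ⟨α', β', rfl⟩
    exact ⟨_, _, qmat_add κ α β α' β'⟩
  algebraMap_mem' q := ⟨_, _, algebraMap_eq_qmat κ q⟩

variable {β₀ : k}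

def diagUnit (hβ₀ : β₀ ≠ 0) : (Matrix (Fin 2) (Fin 2) k)ˣ where
  val := Matrix.diagonal ![1, β₀]
  inv := Matrix.diagonal ![1, β₀⁻¹]
  val_inv := by
    rw [Matrix.diagonal_mul_diagonal, ← Matrix.diagonal_one]
    congr 1; ext i; fin_cases i <;> simp [hβ₀]
  inv_val := by
    rw [Matrix.diagonal_mul_diagonal, ← Matrix.diagonal_one]
    congr 1; ext i; fin_cases i <;> simp [hβ₀]

def conjDiag (hβ₀ : β₀ ≠ 0) : Matrix (Fin 2) (Fin 2) k ≃ₐ[ℚ] Matrix (Fin 2) (Fin 2) k :=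
  MulSemiringAction.toAlgEquiv ℚ _ (ConjAct.toConjAct (diagUnit hβ₀))

lemma conjDiag_qmat (hβ₀ : β₀ ≠ 0) {κ κ' : ℚ} (hκ' : (κ' : k) = β₀ * σ β₀ * κ) (α β : k) :
    conjDiag hβ₀ (qmat k σ κ α β) = qmat k σ κ' α (β * β₀⁻¹) := by
  have hσβ₀ : σ β₀ ≠ 0 := by simpa using hβ₀
  change Matrix.diagonal ![1, β₀] * qmat k σ κ α β * Matrix.diagonal ![1, β₀⁻¹] = _
  ext i j
  fin_cases i <;> fin_cases j <;> simp [qmat, hκ', Matrix.diagonal_mul, Matrix.mul_diagonal]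
  all_goals field_simp

lemma coe_map_conjDiag (hσ : ∀ x, σ (σ x) = x) (hβ₀ : β₀ ≠ 0) {κ κ' : ℚ}
    (hκ' : (κ' : k) = β₀ * σ β₀ * κ) :
    ((quaternionSubalgebra σ hσ κ).map
        (conjDiag hβ₀ : Matrix (Fin 2) (Fin 2) k →ₐ[ℚ] Matrix (Fin 2) (Fin 2) k) :
      Set (Matrix (Fin 2) (Fin 2) k)) = Bset k σ κ' := by
  ext M
  rw [Subalgebra.coe_map]
  constructor
  · rintro ⟨_, ⟨α, β, rfl⟩, rfl⟩
    exact ⟨α, β * β₀⁻¹, conjDiag_qmat hβ₀ hκ' α β⟩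
  · rintro ⟨α, β, rfl⟩
    refine ⟨qmat k σ κ α (β * β₀), ⟨_, _, rfl⟩, ?_⟩
    rw [AlgEquiv.coe_toAlgHom, conjDiag_qmat hβ₀ hκ', mul_inv_cancel_right₀ hβ₀]

lemma qmat_mem_Oset_rescale_iff (hβ₀ : β₀ ≠ 0) (κ κ' : ℚ) (𝔡₂ 𝔞 : FractionalIdeal (𝓞 k)⁰ k)
    (lam α β : k) :
    qmat k σ κ' α (β * β₀⁻¹) ∈ Oset k σ κ' 𝔡₂ (spanSingleton (𝓞 k)⁰ β₀ * 𝔞) (β₀ * lam) ↔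
      qmat k σ κ α β ∈ Oset k σ κ 𝔡₂ 𝔞 lam := by
  have hlam : β₀ * lam * (β * β₀⁻¹) = lam * β := by field_simp
  rw [qmat_mem_Oset_iff, qmat_mem_Oset_iff, mul_inv_mem_inv_spanSingleton_mul_iff hβ₀, hlam]

end QuaternionMatrices

theorem change_of_delta
    (Δ : ℤ) (hΔneg : Δ < 0)
    (hdeg : Module.finrank ℚ k = 2)
    (s : k) (hs : s ^ 2 = (Δ : k))
    (σ : k ≃ₐ[ℚ] k) (hσs : σ s = -s)
    (κ : ℚ)
    (β₀ : k) (hβ₀ : β₀ ≠ 0)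
    (D : ℕ)
    (𝔡₂ : FractionalIdeal (𝓞 k)⁰ k)
    (𝔞 : FractionalIdeal (𝓞 k)⁰ k)
    (h𝔞N : FractionalIdeal.absNorm 𝔞 = κ * ((|Δ| : ℤ) : ℚ) / (D : ℚ))
    (lam : k) (hlam : lam ∈ 𝔡₂⁻¹ * 𝔞)
    (hlamgen : 𝔡₂⁻¹ * 𝔞 = spanSingleton (𝓞 k)⁰ lam + 𝔞)
    (hlamnorm : ∃ n : ℤ, Algebra.norm ℚ lam - κ = n * FractionalIdeal.absNorm 𝔞) :
    -- `φ_{β₀} : B_κ → B_{κ'}`, `[α,β] ↦ [α, ββ₀⁻¹]`, is an isomorphism of `ℚ`-algebras ...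
    ∃ S S' : Subalgebra ℚ (Matrix (Fin 2) (Fin 2) k),
      (S : Set (Matrix (Fin 2) (Fin 2) k)) = Bset k σ κ ∧
      (S' : Set (Matrix (Fin 2) (Fin 2) k)) = Bset k σ (Algebra.norm ℚ β₀ * κ) ∧
      ∃ φ : S ≃ₐ[ℚ] S',
        (∀ (α β : k) (h : qmat k σ κ α β ∈ S)
            (h' : qmat k σ (Algebra.norm ℚ β₀ * κ) α (β * β₀⁻¹) ∈ S'),
          φ ⟨qmat k σ κ α β, h⟩ = ⟨qmat k σ (Algebra.norm ℚ β₀ * κ) α (β * β₀⁻¹), h'⟩) ∧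
        -- ... `𝔞' = β₀𝔞` and `λ' = β₀λ` satisfy the analogous conditions for `κ'` ...
        FractionalIdeal.absNorm (spanSingleton (𝓞 k)⁰ β₀ * 𝔞)
          = (Algebra.norm ℚ β₀ * κ) * ((|Δ| : ℤ) : ℚ) / (D : ℚ) ∧
        β₀ * lam ∈ 𝔡₂⁻¹ * (spanSingleton (𝓞 k)⁰ β₀ * 𝔞) ∧
        𝔡₂⁻¹ * (spanSingleton (𝓞 k)⁰ β₀ * 𝔞)
          = spanSingleton (𝓞 k)⁰ (β₀ * lam) + spanSingleton (𝓞 k)⁰ β₀ * 𝔞 ∧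
        (∃ n : ℤ, Algebra.norm ℚ (β₀ * lam) - Algebra.norm ℚ β₀ * κ
          = n * FractionalIdeal.absNorm (spanSingleton (𝓞 k)⁰ β₀ * 𝔞)) ∧
        -- ... and `φ_{β₀}` carries `O_{𝔞,λ,B_κ}` onto `O_{𝔞',λ',B_{κ'}}`.
        (∀ (M : Matrix (Fin 2) (Fin 2) k) (hM : M ∈ S),
          M ∈ Oset k σ κ 𝔡₂ 𝔞 lam ↔
            ((φ ⟨M, hM⟩ : S') : Matrix (Fin 2) (Fin 2) k)
              ∈ Oset k σ (Algebra.norm ℚ β₀ * κ) 𝔡₂ (spanSingleton (𝓞 k)⁰ β₀ * 𝔞)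
                  (β₀ * lam)) := by
  have : Algebra.IsQuadraticExtension ℚ k := ⟨hdeg⟩
  have hσ := Algebra.IsQuadraticExtension.algEquiv_apply_apply σ
  have hs0 : s ≠ 0 := by
    rintro rfl
    exact hΔneg.ne (by exact_mod_cast hs.symm.trans (zero_pow two_ne_zero))
  have hσ1 : σ ≠ 1 := AlgEquiv.ne_one_of_apply_eq_neg hs0 hσs
  have hNpos : 0 < Algebra.norm ℚ β₀ :=
    Algebra.IsQuadraticExtension.norm_pos hσ1 (d := Δ) (by exact_mod_cast hΔneg)
      (by rw [hs, map_intCast]) hσs hβ₀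
  have hκ' : ((Algebra.norm ℚ β₀ * κ : ℚ) : k) = β₀ * σ β₀ * κ := by
    rw [Rat.cast_mul, ← Algebra.IsQuadraticExtension.algebraMap_norm_eq_mul_apply hσ1, eq_ratCast]
  have hN : FractionalIdeal.absNorm (spanSingleton (𝓞 k)⁰ β₀ * 𝔞)
      = Algebra.norm ℚ β₀ * FractionalIdeal.absNorm 𝔞 := by
    rw [map_mul, FractionalIdeal.absNorm_span_singleton, abs_of_pos hNpos]
  have hmul : 𝔡₂⁻¹ * (spanSingleton (𝓞 k)⁰ β₀ * 𝔞) = spanSingleton (𝓞 k)⁰ β₀ * (𝔡₂⁻¹ * 𝔞) :=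
    mul_left_comm _ _ _
  refine ⟨_, _, rfl, coe_map_conjDiag hσ hβ₀ hκ',
    (conjDiag hβ₀).subalgebraMap (quaternionSubalgebra σ hσ κ),
    fun α β _ _ => Subtype.ext (conjDiag_qmat hβ₀ hκ' α β), ?_, ?_, ?_, ?_, ?_⟩
  · rw [hN, h𝔞N]
    ring
  · rw [hmul]
    exact mul_mem_mul (mem_spanSingleton_self _ β₀) hlam
  · rw [hmul, hlamgen, mul_add, spanSingleton_mul_spanSingleton]
  · obtain ⟨n, hn⟩ := hlamnorm
    exact ⟨n, by rw [map_mul, hN]; linear_combination Algebra.norm ℚ β₀ * hn⟩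
  · rintro _ ⟨α, β, rfl⟩
    rw [AlgEquiv.subalgebraMap_apply_coe, conjDiag_qmat hβ₀ hκ', qmat_mem_Oset_rescale_iff hβ₀]

end
end
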